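/- arXiv:2511.02605 — 2 statements merged into one kernel-verified Lean document; each statement's English description precedes it below -/
import Mathlib

section
/- (Existence of an infinite shielded run) Let W be a controllable winning region, let ν0 ∈ W, and let ienv : V → X be any environment policy satisfying ρe ν (ienv ν) for all ν ∈ W. Then there exists an infinite run ν : ℕ → V with ν 0 = ν0 such that for every i ∈ ℕ: the input component of ν (i+1) equals ienv (ν i), ρs (ν i) (ν (i+1)) holds, and ν (i+1) ∈ W. Thus the shielded system can be executed forever without violating the system transition relation or leaving the winning region. -/
/-- Existence of an infinite shielded run: if `W` is controllable, `ν0 ∈ W`,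
and `ienv` is an environment policy satisfying `ρe ν (ienv ν)` on `W`, then
there is an infinite run starting at `ν0` whose inputs follow `ienv`, whose
steps satisfy `ρs`, and which never leaves `W`. -/
theorem exists_infinite_shielded_run
    {X Y : Type*} (ρe : X × Y → X → Prop) (ρs : X × Y → X × Y → Prop)
    (W : Set (X × Y))
    (controllable : ∀ ν ∈ W, ∀ x', ρe ν x' →
      ∃ y', ρs ν (x', y') ∧ (x', y') ∈ W)
    (ν0 : X × Y) (hν0 : ν0 ∈ W)
    (ienv : X × Y → X) (hienv : ∀ ν ∈ W, ρe ν (ienv ν)) :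
    ∃ ν : ℕ → X × Y, ν 0 = ν0 ∧
      ∀ i : ℕ, (ν (i + 1)).1 = ienv (ν i) ∧
        ρs (ν i) (ν (i + 1)) ∧ ν (i + 1) ∈ W := by
  have step : ∀ ν : {v // v ∈ W}, ∃ ν' : {v // v ∈ W},
      (ν'.1).1 = ienv ν.1 ∧ ρs ν.1 ν'.1 := by
    rintro ⟨ν, hν⟩
    obtain ⟨y', hs, hW⟩ := controllable ν hν (ienv ν) (hienv ν hν)
    exact ⟨⟨(ienv ν, y'), hW⟩, rfl, hs⟩
  choose f hf1 hf2 using step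
  let g : ℕ → {v // v ∈ W} := fun n => f^[n] ⟨ν0, hν0⟩
  refine ⟨fun n => (g n).1, rfl, fun i => ?_⟩
  have : g (i + 1) = f (g i) := Function.iterate_succ_apply' f i _
  simp only
  rw [this]
  exact ⟨hf1 (g i), hf2 (g i), (f (g i)).2⟩
end

section
/- (Liveness of the nominal Minepump strategy under assumption1) Suppose highwater, pump : ℕ → Prop satisfy pump (t+1) ↔ highwater t for all t, and assumption1 holds. Then ¬highwater holds infinitely often: for every t there exists s ≥ t with ¬ highwater s. Equivalently, the trace satisfies GF(¬highwater), so whenever the water level is high it is always eventually cleared. -/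
/-- Liveness of the nominal Minepump strategy under assumption1: if
`pump (t+1) ↔ highwater t` for all `t` and assumption1
(`∀ t, (pump t ∧ pump (t+1)) → ¬ highwater (t+2)`) holds, then ¬highwater
holds infinitely often: for every `t` there exists `s ≥ t` with
`¬ highwater s`. -/
theorem nominal_minepump_liveness
    (highwater pump : ℕ → Prop)
    (hdef : ∀ t : ℕ, pump (t + 1) ↔ highwater t)
    (assumption1 : ∀ t : ℕ, (pump t ∧ pump (t + 1)) → ¬ highwater (t + 2)) :
    ∀ t : ℕ, ∃ s : ℕ, t ≤ s ∧ ¬ highwater s := by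
  intro t
  by_cases h0 : highwater t
  · by_cases h1 : highwater (t + 1)
    · exact ⟨t + 3, by omega, by
        have := assumption1 (t + 1) ⟨(hdef t).mpr h0, (hdef (t + 1)).mpr h1⟩
        simpa [show t + 1 + 2 = t + 3 by omega] using this⟩
    · exact ⟨t + 1, by omega, h1⟩
  · exact ⟨t, le_refl t, h0⟩
end
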